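/- Let s ∈ (0,1/2) and b > 0, and for r > 0 and t ≥ 0 define I^{±}(r,t) = 4π ∫_{0}^{∞} sin(πs) e^{−tσ} σ^s (σ+2r)^s / |σ^s (σ+2r)^s e^{iπs} ∓ b(σ+r)|² dσ. Then as (r,t) → (0⁺, 0⁺), I^{±}(r,t) converges to the finite limit 4π sin(πs) ∫_{0}^{∞} σ^{2s} / |σ^{2s} e^{iπs} ∓ bσ|² dσ, and in particular this limiting integral is finite. -/

import Mathlib

/-!
Dominated convergence in `σ`. With `A = σ^s (σ+2r)^s` and `c = sin(πs) > 0`, the two elementary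
bounds `|x e^{iθ} - y|² ≥ (x sin θ)²` and `|x e^{iθ} - y|² ≥ (y sin θ)²` give, uniformly in
`0 ≤ r ≤ 1`, `t ≥ 0`, the majorant `c A / (A c)² ≤ c⁻¹ σ^{-2s}` near `0` and
`c A / (b σ c)² ≤ 3^s b⁻² c⁻¹ σ^{2s-2}` near `∞`; both are integrable precisely because `2s < 1`.
The integrand is continuous in `(r,t)` at `(0,0)`, where `σ^s σ^s = σ^{2s}` turns it into
`c` times the limiting integrand, which is therefore integrable as well.
-/

open Filter

/-- The branch-cut integral `I^{±}(r,t)`, where `ε = 1` corresponds to the `+` superscript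
(and hence to the `-` sign in the denominator `|⋯ ∓ b(σ+r)|²`), and `ε = -1` to `-`. -/
noncomputable def branchCutIntegral (s b ε r t : ℝ) : ℝ :=
  4 * Real.pi * ∫ σ in Set.Ioi (0 : ℝ),
    Real.sin (Real.pi * s) * Real.exp (-(t * σ)) * σ ^ s * (σ + 2 * r) ^ s /
      ‖((σ ^ s * (σ + 2 * r) ^ s : ℝ) : ℂ) *
          Complex.exp (Complex.I * (Real.pi : ℂ) * (s : ℂ)) -
        (ε : ℂ) * (b : ℂ) * ((σ + r : ℝ) : ℂ)‖ ^ 2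

open MeasureTheory Set Topology

section Phase

variable (θ x y : ℝ)

theorem sq_norm_ofReal_mul_exp_sub_ofReal :
    ‖(x : ℂ) * Complex.exp (Complex.I * θ) - y‖ ^ 2 =
      (x * Real.cos θ - y) ^ 2 + (x * Real.sin θ) ^ 2 := by
  rw [mul_comm Complex.I, Complex.exp_mul_I, Complex.sq_norm, Complex.normSq_apply,
    ← Complex.ofReal_cos, ← Complex.ofReal_sin]
  simp only [Complex.sub_re, Complex.sub_im, Complex.mul_re, Complex.mul_im, Complex.add_re,
    Complex.add_im, Complex.ofReal_re, Complex.ofReal_im, Complex.I_re, Complex.I_im]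
  ring

theorem sq_mul_sin_le_sq_norm_ofReal_mul_exp_sub_ofReal_left :
    (x * Real.sin θ) ^ 2 ≤ ‖(x : ℂ) * Complex.exp (Complex.I * θ) - y‖ ^ 2 := by
  rw [sq_norm_ofReal_mul_exp_sub_ofReal]
  nlinarith [sq_nonneg (x * Real.cos θ - y)]

theorem sq_mul_sin_le_sq_norm_ofReal_mul_exp_sub_ofReal_right :
    (y * Real.sin θ) ^ 2 ≤ ‖(x : ℂ) * Complex.exp (Complex.I * θ) - y‖ ^ 2 := by
  have hsplit : (x * Real.cos θ - y) ^ 2 + (x * Real.sin θ) ^ 2 =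
      (x - y * Real.cos θ) ^ 2 + (y * Real.sin θ) ^ 2 := by
    linear_combination (x ^ 2 - y ^ 2) * Real.sin_sq_add_cos_sq θ
  rw [sq_norm_ofReal_mul_exp_sub_ofReal, hsplit]
  nlinarith [sq_nonneg (x - y * Real.cos θ)]

end Phase

theorem integrableOn_Ioi_ite_rpow {p q : ℝ} (hp : -1 < p) (hq : q < -1) (C₁ C₂ : ℝ) :
    IntegrableOn (fun σ : ℝ => if σ ≤ 1 then C₁ * σ ^ p else C₂ * σ ^ q) (Ioi 0) := by
  rw [← Ioc_union_Ioi_eq_Ioi zero_le_one]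
  refine IntegrableOn.union ?_ ?_
  · have h := (intervalIntegral.intervalIntegrable_rpow' (a := 0) (b := 1) hp).const_mul C₁
    refine ((intervalIntegrable_iff_integrableOn_Ioc_of_le zero_le_one).mp h).congr_fun
      (fun σ hσ => ?_) measurableSet_Ioc
    simp [hσ.2]
  · refine IntegrableOn.congr_fun ((integrableOn_Ioi_rpow_of_lt hq one_pos).const_mul C₂)
      (fun σ hσ => ?_) measurableSet_Ioi
    simp [not_le.mpr (mem_Ioi.mp hσ)]

noncomputable def driftDenominator (s b ε x u : ℝ) : ℝ :=
  ‖(x : ℂ) * Complex.exp (Complex.I * (Real.pi : ℂ) * (s : ℂ)) - (ε : ℂ) * (b : ℂ) * (u : ℂ)‖ ^ 2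

section Denominator

variable {s b ε : ℝ}

theorem driftDenominator_eq (x u : ℝ) :
    driftDenominator s b ε x u =
      ‖(x : ℂ) * Complex.exp (Complex.I * ↑(Real.pi * s)) - ↑(ε * b * u)‖ ^ 2 := by
  simp only [driftDenominator, Complex.ofReal_mul, mul_assoc]

theorem sq_mul_sin_le_driftDenominator_left (x u : ℝ) :
    (x * Real.sin (Real.pi * s)) ^ 2 ≤ driftDenominator s b ε x u := by
  rw [driftDenominator_eq]
  exact sq_mul_sin_le_sq_norm_ofReal_mul_exp_sub_ofReal_left _ _ _

theorem sq_mul_sin_le_driftDenominator_right (hε : ε ^ 2 = 1) (x u : ℝ) :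
    (b * u * Real.sin (Real.pi * s)) ^ 2 ≤ driftDenominator s b ε x u := by
  have h := sq_mul_sin_le_sq_norm_ofReal_mul_exp_sub_ofReal_right (Real.pi * s) x (ε * b * u)
  rw [driftDenominator_eq]
  linear_combination h - (b * u * Real.sin (Real.pi * s)) ^ 2 * hε

theorem driftDenominator_pos (hs : Real.sin (Real.pi * s) ≠ 0) (hb : b ≠ 0) (hε : ε ^ 2 = 1)
    (x : ℝ) {u : ℝ} (hu : u ≠ 0) : 0 < driftDenominator s b ε x u :=
  (by positivity : 0 < (b * u * Real.sin (Real.pi * s)) ^ 2).trans_le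
    (sq_mul_sin_le_driftDenominator_right hε x u)

end Denominator

theorem sin_pi_mul_pos {s : ℝ} (hs₀ : 0 < s) (hs₁ : s < 1) : 0 < Real.sin (Real.pi * s) :=
  Real.sin_pos_of_pos_of_lt_pi (by positivity) (by nlinarith [Real.pi_pos])

noncomputable def branchCutIntegrand (s b ε r t σ : ℝ) : ℝ :=
  Real.sin (Real.pi * s) * Real.exp (-(t * σ)) * σ ^ s * (σ + 2 * r) ^ s /
    driftDenominator s b ε (σ ^ s * (σ + 2 * r) ^ s) (σ + r)

theorem branchCutIntegral_eq_integral (s b ε r t : ℝ) :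
    branchCutIntegral s b ε r t = 4 * Real.pi * ∫ σ in Ioi 0, branchCutIntegrand s b ε r t σ :=
  rfl

section Integrand

variable {s b ε r t σ : ℝ}

theorem branchCutIntegrand_nonneg (hc : 0 ≤ Real.sin (Real.pi * s)) (hr : 0 ≤ r) (hσ : 0 < σ) :
    0 ≤ branchCutIntegrand s b ε r t σ := by
  unfold branchCutIntegrand driftDenominator
  positivity

theorem branchCutIntegrand_le_div (hc : 0 ≤ Real.sin (Real.pi * s)) (hr : 0 ≤ r) (ht : 0 ≤ t)
    (hσ : 0 < σ) :
    branchCutIntegrand s b ε r t σ ≤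
      Real.sin (Real.pi * s) * (σ ^ s * (σ + 2 * r) ^ s) /
        driftDenominator s b ε (σ ^ s * (σ + 2 * r) ^ s) (σ + r) := by
  have hexp : Real.exp (-(t * σ)) ≤ 1 := Real.exp_le_one_iff.mpr (by nlinarith)
  unfold branchCutIntegrand
  gcongr ?_ / _
  · unfold driftDenominator; positivity
  · calc _ = Real.sin (Real.pi * s) * (σ ^ s * (σ + 2 * r) ^ s) * Real.exp (-(t * σ)) := by ring
      _ ≤ _ := mul_le_of_le_one_right (by positivity) hexp

theorem rpow_two_mul_le_rpow_mul_rpow_add (hs : 0 ≤ s) (hr : 0 ≤ r) (hσ : 0 < σ) :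
    σ ^ (2 * s) ≤ σ ^ s * (σ + 2 * r) ^ s := by
  rw [two_mul, Real.rpow_add hσ]
  gcongr
  linarith

theorem rpow_mul_rpow_add_two_mul_le (hs : 0 ≤ s) (hr : 0 ≤ r) (hrσ : r ≤ σ) :
    σ ^ s * (σ + 2 * r) ^ s ≤ 3 ^ s * σ ^ (2 * s) := by
  have hσ : 0 ≤ σ := hr.trans hrσ
  calc σ ^ s * (σ + 2 * r) ^ s = (σ * (σ + 2 * r)) ^ s := (Real.mul_rpow hσ (by linarith)).symm
    _ ≤ (3 * σ ^ 2) ^ s := Real.rpow_le_rpow (by positivity) (by nlinarith) hs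
    _ = 3 ^ s * σ ^ (2 * s) := by
      rw [Real.mul_rpow (by norm_num) (by positivity), Real.rpow_mul hσ, Real.rpow_two]

theorem branchCutIntegrand_le_rpow_neg (hs : 0 ≤ s) (hc : 0 < Real.sin (Real.pi * s))
    (hr : 0 ≤ r) (ht : 0 ≤ t) (hσ : 0 < σ) :
    branchCutIntegrand s b ε r t σ ≤ (Real.sin (Real.pi * s))⁻¹ * σ ^ (-(2 * s)) := by
  set c := Real.sin (Real.pi * s)
  set A := σ ^ s * (σ + 2 * r) ^ s
  have hA : 0 < A := by positivity
  have hσA := rpow_two_mul_le_rpow_mul_rpow_add hs hr hσ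
  calc branchCutIntegrand s b ε r t σ ≤ c * A / driftDenominator s b ε A (σ + r) :=
        branchCutIntegrand_le_div hc.le hr ht hσ
    _ ≤ c * A / (A * c) ^ 2 := by
        gcongr
        exact sq_mul_sin_le_driftDenominator_left A (σ + r)
    _ = c⁻¹ * A⁻¹ := by field_simp
    _ ≤ c⁻¹ * (σ ^ (2 * s))⁻¹ := by gcongr
    _ = c⁻¹ * σ ^ (-(2 * s)) := by rw [Real.rpow_neg hσ.le]

theorem branchCutIntegrand_le_rpow_sub_two (hs : 0 ≤ s) (hc : 0 < Real.sin (Real.pi * s))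
    (hb : 0 < b) (hε : ε ^ 2 = 1) (hr : 0 ≤ r) (ht : 0 ≤ t) (hσ : 0 < σ) (hrσ : r ≤ σ) :
    branchCutIntegrand s b ε r t σ ≤
      3 ^ s / (b ^ 2 * Real.sin (Real.pi * s)) * σ ^ (2 * s - 2) := by
  set c := Real.sin (Real.pi * s)
  set A := σ ^ s * (σ + 2 * r) ^ s
  calc branchCutIntegrand s b ε r t σ ≤ c * A / driftDenominator s b ε A (σ + r) :=
        branchCutIntegrand_le_div hc.le hr ht hσ
    _ ≤ c * (3 ^ s * σ ^ (2 * s)) / (b * σ * c) ^ 2 := by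
        gcongr ?_ / ?_
        · exact mul_le_mul_of_nonneg_left (rpow_mul_rpow_add_two_mul_le hs hr hrσ) hc.le
        · calc (b * σ * c) ^ 2 ≤ (b * (σ + r) * c) ^ 2 := by gcongr; linarith
            _ ≤ _ := sq_mul_sin_le_driftDenominator_right hε A (σ + r)
    _ = 3 ^ s / (b ^ 2 * c) * σ ^ (2 * s - 2) := by
        rw [Real.rpow_sub hσ, Real.rpow_two]
        field_simp

noncomputable def branchCutMajorant (s b σ : ℝ) : ℝ :=
  if σ ≤ 1 then (Real.sin (Real.pi * s))⁻¹ * σ ^ (-(2 * s))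
  else 3 ^ s / (b ^ 2 * Real.sin (Real.pi * s)) * σ ^ (2 * s - 2)

theorem integrableOn_branchCutMajorant (hs : s < 1 / 2) :
    IntegrableOn (branchCutMajorant s b) (Ioi 0) :=
  integrableOn_Ioi_ite_rpow (by linarith) (by linarith) _ _

theorem norm_branchCutIntegrand_le (hs : 0 ≤ s) (hc : 0 < Real.sin (Real.pi * s)) (hb : 0 < b)
    (hε : ε ^ 2 = 1) (hr₀ : 0 ≤ r) (hr₁ : r ≤ 1) (ht : 0 ≤ t) (hσ : 0 < σ) :
    ‖branchCutIntegrand s b ε r t σ‖ ≤ branchCutMajorant s b σ := by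
  rw [Real.norm_of_nonneg (branchCutIntegrand_nonneg hc.le hr₀ hσ), branchCutMajorant]
  split_ifs with hσ₁
  · exact branchCutIntegrand_le_rpow_neg hs hc hr₀ ht hσ
  · exact branchCutIntegrand_le_rpow_sub_two hs hc hb hε hr₀ ht hσ (by linarith)

theorem measurable_branchCutIntegrand (s b ε r t : ℝ) :
    Measurable (branchCutIntegrand s b ε r t) := by
  unfold branchCutIntegrand driftDenominator
  fun_prop

theorem continuousAt_branchCutIntegrand (hc : Real.sin (Real.pi * s) ≠ 0) (hb : b ≠ 0)
    (hε : ε ^ 2 = 1) (hσ : 0 < σ) :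
    ContinuousAt (fun p : ℝ × ℝ => branchCutIntegrand s b ε p.1 p.2 σ) (0, 0) := by
  have hbase : ContinuousAt (fun p : ℝ × ℝ => (σ + 2 * p.1) ^ s) (0, 0) :=
    (by fun_prop : ContinuousAt (fun p : ℝ × ℝ => σ + 2 * p.1) (0, 0)).rpow_const
      (by simp [hσ.ne'])
  unfold branchCutIntegrand driftDenominator
  exact ContinuousAt.div (by fun_prop) (by fun_prop)
    (driftDenominator_pos hc hb hε _ (by simpa using hσ.ne')).ne'

theorem branchCutIntegrand_zero_zero (hσ : 0 < σ) :
    branchCutIntegrand s b ε 0 0 σ =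
      Real.sin (Real.pi * s) * (σ ^ (2 * s) / driftDenominator s b ε (σ ^ (2 * s)) σ) := by
  have hσσ : σ ^ s * σ ^ s = σ ^ (2 * s) := by rw [← Real.rpow_add hσ, two_mul]
  simp only [branchCutIntegrand, mul_zero, zero_mul, add_zero, neg_zero, Real.exp_zero, mul_one,
    mul_assoc, hσσ, mul_div_assoc]

theorem integrableOn_branchCutIntegrand (hs₀ : 0 < s) (hs₁ : s < 1 / 2) (hb : 0 < b)
    (hε : ε ^ 2 = 1) (hr₀ : 0 ≤ r) (hr₁ : r ≤ 1) (ht : 0 ≤ t) :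
    IntegrableOn (branchCutIntegrand s b ε r t) (Ioi 0) := by
  refine (integrableOn_branchCutMajorant (b := b) hs₁).mono'
    (measurable_branchCutIntegrand s b ε r t).aestronglyMeasurable ?_
  filter_upwards [self_mem_ae_restrict measurableSet_Ioi] with σ hσ
  exact norm_branchCutIntegrand_le hs₀.le (sin_pi_mul_pos hs₀ (by linarith)) hb hε hr₀ hr₁ ht hσ

theorem tendsto_integral_branchCutIntegrand (hs₀ : 0 < s) (hs₁ : s < 1 / 2) (hb : 0 < b)
    (hε : ε ^ 2 = 1) :
    Tendsto (fun p : ℝ × ℝ => ∫ σ in Ioi 0, branchCutIntegrand s b ε p.1 p.2 σ)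
      (𝓝[>] 0 ×ˢ 𝓝[>] 0) (𝓝 (∫ σ in Ioi 0, branchCutIntegrand s b ε 0 0 σ)) := by
  have hc := sin_pi_mul_pos hs₀ (by linarith)
  have hparam : ∀ᶠ p : ℝ × ℝ in 𝓝[>] 0 ×ˢ 𝓝[>] 0, p ∈ Ioc (0 : ℝ) 1 ×ˢ Ioi (0 : ℝ) :=
    prod_mem_prod (Ioc_mem_nhdsGT one_pos) self_mem_nhdsWithin
  refine tendsto_integral_filter_of_dominated_convergence _
    (Eventually.of_forall fun p =>
      (measurable_branchCutIntegrand s b ε p.1 p.2).aestronglyMeasurable) ?_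
    (integrableOn_branchCutMajorant (b := b) hs₁) ?_
  · filter_upwards [hparam] with p ⟨⟨hr₀, hr₁⟩, ht⟩
    filter_upwards [self_mem_ae_restrict measurableSet_Ioi] with σ hσ
    exact norm_branchCutIntegrand_le hs₀.le hc hb hε hr₀.le hr₁ ht.le hσ
  · filter_upwards [self_mem_ae_restrict measurableSet_Ioi] with σ hσ
    exact (continuousAt_branchCutIntegrand hc.ne' hb.ne' hε hσ).tendsto.mono_left
      ((Filter.prod_mono nhdsWithin_le_nhds nhdsWithin_le_nhds).trans_eq nhds_prod_eq.symm)

end Integrand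

theorem stmt_5 (s b : ℝ) (hs0 : 0 < s) (hs2 : s < 1 / 2) (hb : 0 < b)
    (ε : ℝ) (hε : ε = 1 ∨ ε = -1) :
    MeasureTheory.IntegrableOn
      (fun σ : ℝ => σ ^ (2 * s) /
        ‖((σ ^ (2 * s) : ℝ) : ℂ) *
            Complex.exp (Complex.I * (Real.pi : ℂ) * (s : ℂ)) -
          (ε : ℂ) * (b : ℂ) * (σ : ℂ)‖ ^ 2)
      (Set.Ioi (0 : ℝ)) ∧
    Tendsto (fun p : ℝ × ℝ => branchCutIntegral s b ε p.1 p.2)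
      ((nhdsWithin (0 : ℝ) (Set.Ioi 0)) ×ˢ (nhdsWithin (0 : ℝ) (Set.Ioi 0)))
      (nhds (4 * Real.pi * Real.sin (Real.pi * s) *
        ∫ σ in Set.Ioi (0 : ℝ),
          σ ^ (2 * s) /
            ‖((σ ^ (2 * s) : ℝ) : ℂ) *
                Complex.exp (Complex.I * (Real.pi : ℂ) * (s : ℂ)) -
              (ε : ℂ) * (b : ℂ) * (σ : ℂ)‖ ^ 2)) := by
  have hε2 : ε ^ 2 = 1 := by rcases hε with rfl | rfl <;> norm_num
  have hc := (sin_pi_mul_pos hs0 (by linarith)).ne'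
  have hF₀ : EqOn (branchCutIntegrand s b ε 0 0)
      (fun σ => Real.sin (Real.pi * s) * (σ ^ (2 * s) / driftDenominator s b ε (σ ^ (2 * s)) σ))
      (Ioi 0) :=
    fun σ hσ => branchCutIntegrand_zero_zero hσ
  constructor
  · refine IntegrableOn.congr_fun ((integrableOn_branchCutIntegrand hs0 hs2 hb hε2 le_rfl
      zero_le_one le_rfl).const_mul (Real.sin (Real.pi * s))⁻¹) (fun σ hσ => ?_) measurableSet_Ioi
    rw [hF₀ hσ, inv_mul_cancel_left₀ hc, driftDenominator]
  · simp only [branchCutIntegral_eq_integral]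
    have h := (tendsto_integral_branchCutIntegrand hs0 hs2 hb hε2).const_mul (4 * Real.pi)
    rwa [setIntegral_congr_fun measurableSet_Ioi hF₀, integral_const_mul, ← mul_assoc] at h
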